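/- arXiv:0905.4798 — 3 statements merged into one kernel-verified Lean document; each statement's English description precedes it below -/
import Mathlib

section
/- The subgroup of SL₂(ℤ) generated by squares of elements of Γ(2) equals Γ(4). -/
open Matrix CongruenceSubgroup
open scoped MatrixGroups

/-!
Squares of elements of `Γ(2)` lie in `Γ(4)` because `(1 + 2X)² = 1 + 4(X + X²)`.

Conversely, the Euclidean algorithm on the first column, run with steps of even size, shows
that `Γ(2)` is generated by `-1`, `T²` and `U² = !![1, 0; 2, 1]`. Modulo the normal subgroup
`N` generated by the squares, every element of `Γ(2)` has order at most two, so `Γ(2) / N` is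
abelian and every `A ∈ Γ(2)` is congruent modulo `N` to
`(-1)^i T^(2j) U^(2k) = ±!![1 + 4jk, 2j; 2k, 1]`. If `A ∈ Γ(4)` this matrix lies in `Γ(4)` too,
which forces `i`, `j`, `k` to be even, so it lies in `N`, and hence so does `A`.
-/

namespace Subgroup

variable {G : Type*} [Group G]

theorem exists_zpow_mul_zpow_mul_zpow_eq_of_mem_closure {a b c x : G} (hab : Commute a b)
    (hac : Commute a c) (hbc : Commute b c) (hx : x ∈ closure {a, b, c}) :
    ∃ i j k : ℤ, a ^ i * b ^ j * c ^ k = x := by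
  induction hx using closure_induction with
  | mem x hx =>
    rcases hx with rfl | rfl | rfl
    exacts [⟨1, 0, 0, by simp⟩, ⟨0, 1, 0, by simp⟩, ⟨0, 0, 1, by simp⟩]
  | one => exact ⟨0, 0, 0, by simp⟩
  | mul x y _ _ hx hy =>
    obtain ⟨i, j, k, rfl⟩ := hx
    obtain ⟨i', j', k', rfl⟩ := hy
    refine ⟨i + i', j + j', k + k', ?_⟩
    calc a ^ (i + i') * b ^ (j + j') * c ^ (k + k')
        = a ^ i * a ^ i' * (b ^ j * b ^ j' * (c ^ k * c ^ k')) := by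
          simp only [_root_.zpow_add, mul_assoc]
      _ = a ^ i * a ^ i' * (b ^ j * c ^ k * (b ^ j' * c ^ k')) := by
          rw [(hbc.zpow_zpow j' k).mul_mul_mul_comm]
      _ = a ^ i * (b ^ j * c ^ k) * (a ^ i' * (b ^ j' * c ^ k')) :=
          (((hab.zpow_zpow i' j).mul_right (hac.zpow_zpow i' k)).mul_mul_mul_comm _ _)
      _ = a ^ i * b ^ j * c ^ k * (a ^ i' * b ^ j' * c ^ k') := by simp only [mul_assoc]
  | inv x _ hx =>
    obtain ⟨i, j, k, rfl⟩ := hx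
    refine ⟨-i, -j, -k, ?_⟩
    rw [((hac.zpow_zpow i k).mul_left (hbc.zpow_zpow j k)).mul_inv, (hab.zpow_zpow i j).mul_inv,
      _root_.zpow_neg, _root_.zpow_neg, _root_.zpow_neg]

def sqClosure (H : Subgroup G) : Subgroup G := closure {x | ∃ a ∈ H, x = a ^ 2}

variable {H : Subgroup G}

theorem sq_mem_sqClosure {a : G} (ha : a ∈ H) : a ^ 2 ∈ H.sqClosure :=
  subset_closure ⟨a, ha, rfl⟩

theorem zpow_mem_sqClosure_of_even {a : G} (ha : a ∈ H) {n : ℤ} (hn : Even n) :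
    a ^ n ∈ H.sqClosure := by
  obtain ⟨m, rfl⟩ := hn
  rw [← two_mul, _root_.zpow_mul']
  exact_mod_cast sq_mem_sqClosure (zpow_mem ha m)

instance normal_sqClosure [hH : H.Normal] : H.sqClosure.Normal := by
  refine ⟨fun x hx g => ?_⟩
  induction hx using closure_induction with
  | mem x hx =>
    obtain ⟨a, ha, rfl⟩ := hx
    simpa [conj_pow] using sq_mem_sqClosure (hH.conj_mem a ha g)
  | one => simp
  | mul x y _ _ hx hy => simpa [mul_assoc] using mul_mem hx hy
  | inv x _ hx => simpa [mul_assoc] using inv_mem hx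

theorem commute_mk_of_mem [H.Normal] {a b : G} (ha : a ∈ H) (hb : b ∈ H) :
    Commute (a : G ⧸ H.sqClosure) b := by
  have hinv : ∀ x ∈ H, (x : G ⧸ H.sqClosure)⁻¹ = x := fun x hx =>
    inv_eq_of_mul_eq_one_left <| by
      rw [← QuotientGroup.mk_mul, QuotientGroup.eq_one_iff, ← sq]; exact sq_mem_sqClosure hx
  have := hinv _ (mul_mem ha hb)
  rw [QuotientGroup.mk_mul, _root_.mul_inv_rev, hinv a ha, hinv b hb] at this
  exact this.symm

theorem exists_zpow_mul_zpow_mul_zpow_inv_mul_mem_sqClosure [H.Normal] {a b c x : G}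
    (ha : a ∈ H) (hb : b ∈ H) (hc : c ∈ H) (hx : x ∈ closure {a, b, c}) :
    ∃ i j k : ℤ, (a ^ i * b ^ j * c ^ k)⁻¹ * x ∈ H.sqClosure := by
  have hx' : (x : G ⧸ H.sqClosure) ∈ closure
      ({(a : G ⧸ H.sqClosure), (b : G ⧸ H.sqClosure), (c : G ⧸ H.sqClosure)} : Set _) := by
    simpa [MonoidHom.map_closure, Set.image_insert_eq] using
      mem_map_of_mem (QuotientGroup.mk' H.sqClosure) hx
  obtain ⟨i, j, k, h⟩ := exists_zpow_mul_zpow_mul_zpow_eq_of_mem_closure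
    (commute_mk_of_mem ha hb) (commute_mk_of_mem ha hc) (commute_mk_of_mem hb hc) hx'
  exact ⟨i, j, k, QuotientGroup.eq.1 (by simpa using h)⟩

end Subgroup

/-- Shifting by `|y|` before dividing by `2y` centres the remainder window on `0`; the parity
hypothesis rules out the endpoint `-|y|`. -/
theorem Int.exists_natAbs_add_two_mul_mul_lt {x y : ℤ} (hy : y ≠ 0) (hxy : Odd (x + y)) :
    ∃ k : ℤ, (x + 2 * k * y).natAbs < y.natAbs := by
  have h2y : 2 * y ≠ 0 := mul_ne_zero two_ne_zero hy
  obtain ⟨q, r, hdiv, hr0, hr⟩ :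
      ∃ q r, r + 2 * (y * q) = x + y.natAbs ∧ 0 ≤ r ∧ r < (2 * y).natAbs :=
    ⟨_, _, by rw [← mul_assoc]; exact Int.emod_add_mul_ediv _ _, Int.emod_nonneg _ h2y,
      Int.emod_lt _ h2y⟩
  refine ⟨-q, ?_⟩
  have hk : x + 2 * -q * y = r - y.natAbs := by linear_combination -hdiv
  obtain ⟨t, ht⟩ := hxy
  omega

namespace ModularGroup

def U : SL(2, ℤ) := ⟨!![1, 0; 1, 1], by simp [det_fin_two_of]⟩

theorem coe_U_zpow (n : ℤ) : (U ^ n).1 = !![1, 0; n, 1] := by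
  induction n with
  | zero => rw [zpow_zero, Matrix.SpecialLinearGroup.coe_one, one_fin_two]
  | succ n h =>
    simp_rw [_root_.zpow_add, zpow_one, Matrix.SpecialLinearGroup.coe_mul, h, U, mul_fin_two]
    congrm !![?_, ?_; ?_, ?_] <;> ring
  | pred n h =>
    simp_rw [_root_.zpow_sub, zpow_one, Matrix.SpecialLinearGroup.coe_mul, h,
      Matrix.SpecialLinearGroup.coe_inv, U, adjugate_fin_two_of, mul_fin_two]
    congrm !![?_, ?_; ?_, ?_] <;> ring

theorem coe_T_sq_zpow (n : ℤ) : ((T ^ 2) ^ n).1 = !![1, 2 * n; 0, 1] := by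
  rw [← zpow_natCast, ← _root_.zpow_mul, coe_T_zpow, Nat.cast_ofNat]

theorem coe_U_sq_zpow (n : ℤ) : ((U ^ 2) ^ n).1 = !![1, 0; 2 * n, 1] := by
  rw [← zpow_natCast, ← _root_.zpow_mul, coe_U_zpow, Nat.cast_ofNat]

end ModularGroup

namespace CongruenceSubgroup

open ModularGroup

theorem mem_Gamma_iff_dvd {N : ℕ} {A : SL(2, ℤ)} :
    A ∈ Γ(N) ↔ ∀ i j, (N : ℤ) ∣ ((A : Matrix (Fin 2) (Fin 2) ℤ) - 1) i j := by
  rw [Gamma_mem', Matrix.SpecialLinearGroup.ext_iff]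
  refine forall₂_congr fun i j => ?_
  rw [SL_reduction_mod_hom_val, Matrix.sub_apply, ← ZMod.intCast_eq_intCast_iff_dvd_sub,
    eq_comm]
  fin_cases i <;> fin_cases j <;> simp

theorem Gamma_le_Gamma_of_dvd {M N : ℕ} (h : M ∣ N) : Γ(N) ≤ Γ(M) := fun _ hA =>
  mem_Gamma_iff_dvd.2 fun i j => (Int.natCast_dvd_natCast.2 h).trans (mem_Gamma_iff_dvd.1 hA i j)

theorem sq_mem_Gamma_four_mul {N : ℕ} {A : SL(2, ℤ)} (hA : A ∈ Γ(2 * N)) :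
    A ^ 2 ∈ Γ(4 * N) := by
  rw [mem_Gamma_iff_dvd] at hA ⊢
  have hsq : ((A ^ 2 : SL(2, ℤ)) : Matrix (Fin 2) (Fin 2) ℤ) - 1 =
      ((A : Matrix (Fin 2) (Fin 2) ℤ) - 1) * (A - 1) + (2 : ℤ) • (A - 1) := by
    rw [sq, Matrix.SpecialLinearGroup.coe_mul]; noncomm_ring
  have h4 : ((4 * N : ℕ) : ℤ) ∣ (2 * N : ℕ) * (2 * N : ℕ) := ⟨N, by push_cast; ring⟩
  have h4' : ((4 * N : ℕ) : ℤ) = 2 * (2 * N : ℕ) := by push_cast; ring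
  intro i j
  rw [hsq, Matrix.add_apply, mul_apply, Fin.sum_univ_two, Matrix.smul_apply, smul_eq_mul]
  exact dvd_add (dvd_add (h4.trans (mul_dvd_mul (hA i 0) (hA 0 j)))
    (h4.trans (mul_dvd_mul (hA i 1) (hA 1 j)))) (h4' ▸ mul_dvd_mul_left 2 (hA i j))

theorem neg_one_mem_Gamma_two : (-1 : SL(2, ℤ)) ∈ Γ(2) := Gamma_mem.2 (by decide)

theorem T_sq_mem_Gamma_two : T ^ 2 ∈ Γ(2) := Gamma_mem.2 (by decide)

theorem U_sq_mem_Gamma_two : U ^ 2 ∈ Γ(2) := Gamma_mem.2 (by decide)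

theorem odd_apply_zero_zero_and_even_apply_one_zero {A : SL(2, ℤ)} (hA : A ∈ Γ(2)) :
    Odd (A 0 0) ∧ Even (A 1 0) := by
  have h00 := mem_Gamma_iff_dvd.1 hA 0 0
  have h10 := mem_Gamma_iff_dvd.1 hA 1 0
  simp only [Matrix.sub_apply, one_apply_eq, one_apply_ne one_ne_zero, sub_zero,
    Nat.cast_ofNat] at h00 h10
  exact ⟨Int.odd_iff.2 (by omega), even_iff_two_dvd.2 h10⟩

theorem exists_natAbs_T_sq_zpow_mul_apply_zero_zero_lt {A : SL(2, ℤ)} (hA : A ∈ Γ(2))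
    (hc : A 1 0 ≠ 0) : ∃ k : ℤ, (((T ^ 2) ^ k * A) 0 0).natAbs < (A 1 0).natAbs := by
  obtain ⟨ha, hc'⟩ := odd_apply_zero_zero_and_even_apply_one_zero hA
  obtain ⟨k, hk⟩ := Int.exists_natAbs_add_two_mul_mul_lt hc (ha.add_even hc')
  refine ⟨k, ?_⟩
  simpa [coe_T_sq_zpow, mul_apply, Fin.sum_univ_two] using hk

theorem exists_natAbs_U_sq_zpow_mul_apply_one_zero_lt {A : SL(2, ℤ)} (hA : A ∈ Γ(2)) :
    ∃ k : ℤ, (((U ^ 2) ^ k * A) 1 0).natAbs < (A 0 0).natAbs := by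
  obtain ⟨ha, hc⟩ := odd_apply_zero_zero_and_even_apply_one_zero hA
  obtain ⟨k, hk⟩ :=
    Int.exists_natAbs_add_two_mul_mul_lt (by rintro h; simp [h] at ha) (hc.add_odd ha)
  refine ⟨k, ?_⟩
  simpa [coe_U_sq_zpow, mul_apply, Fin.sum_univ_two, add_comm] using hk

theorem exists_mem_closure_natAbs_mul_apply_one_zero_lt {A : SL(2, ℤ)} (hA : A ∈ Γ(2))
    (hc : A 1 0 ≠ 0) : ∃ B ∈ Subgroup.closure {-1, T ^ 2, U ^ 2},
      ((B * A) 1 0).natAbs < (A 1 0).natAbs := by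
  obtain ⟨k, hk⟩ := exists_natAbs_T_sq_zpow_mul_apply_zero_zero_lt hA hc
  obtain ⟨l, hl⟩ := exists_natAbs_U_sq_zpow_mul_apply_one_zero_lt
    (mul_mem (zpow_mem T_sq_mem_Gamma_two k) hA)
  refine ⟨(U ^ 2) ^ l * (T ^ 2) ^ k, mul_mem (zpow_mem (Subgroup.subset_closure (by simp)) l)
    (zpow_mem (Subgroup.subset_closure (by simp)) k), ?_⟩
  rw [mul_assoc]
  exact hl.trans hk

theorem mem_closure_of_apply_one_zero_eq_zero {A : SL(2, ℤ)} (hA : A ∈ Γ(2)) (hc : A 1 0 = 0) :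
    A ∈ Subgroup.closure {-1, T ^ 2, U ^ 2} := by
  obtain ⟨m, hm⟩ : (2 : ℤ) ∣ A 0 1 := by simpa using mem_Gamma_iff_dvd.1 hA 0 1
  have had : A 0 0 * A 1 1 = 1 := by
    have hdet := A.det_coe
    rwa [det_fin_two, hc, mul_zero, sub_zero] at hdet
  have hT (n : ℤ) : (T ^ 2) ^ n ∈ Subgroup.closure {-1, T ^ 2, U ^ 2} :=
    zpow_mem (Subgroup.subset_closure (by simp)) n
  rcases Int.eq_one_or_neg_one_of_mul_eq_one' had with ⟨ha, hd⟩ | ⟨ha, hd⟩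
  · convert hT m
    ext i j; fin_cases i <;> fin_cases j <;> simp [coe_T_sq_zpow, ha, hd, hc, hm]
  · have hneg : (-1 : SL(2, ℤ)) ∈ Subgroup.closure {-1, T ^ 2, U ^ 2} :=
      Subgroup.subset_closure (by simp)
    convert mul_mem hneg (hT (-m))
    ext i j; fin_cases i <;> fin_cases j <;> simp [coe_T_sq_zpow, ha, hd, hc, hm]

theorem Gamma_two_eq_closure : Γ(2) = Subgroup.closure {-1, T ^ 2, U ^ 2} := by
  have hle : Subgroup.closure {-1, T ^ 2, U ^ 2} ≤ Γ(2) := by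
    rw [Subgroup.closure_le]
    rintro _ (rfl | rfl | rfl)
    exacts [neg_one_mem_Gamma_two, T_sq_mem_Gamma_two, U_sq_mem_Gamma_two]
  refine le_antisymm (fun A hA => ?_) hle
  induction h : (A 1 0).natAbs using Nat.strong_induction_on generalizing A with
  | _ n ih =>
    by_cases hc : A 1 0 = 0
    · exact mem_closure_of_apply_one_zero_eq_zero hA hc
    obtain ⟨B, hB, hlt⟩ := exists_mem_closure_natAbs_mul_apply_one_zero_lt hA hc
    simpa using mul_mem (inv_mem hB) (ih _ (h ▸ hlt) (B * A) (mul_mem (hle hB) hA) rfl)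

theorem coe_T_sq_zpow_mul_U_sq_zpow (j k : ℤ) :
    (((T ^ 2) ^ j * (U ^ 2) ^ k : SL(2, ℤ)) : Matrix (Fin 2) (Fin 2) ℤ) =
      !![1 + 4 * j * k, 2 * j; 2 * k, 1] := by
  rw [Matrix.SpecialLinearGroup.coe_mul, coe_T_sq_zpow, coe_U_sq_zpow, mul_fin_two]
  congrm !![?_, ?_; ?_, ?_] <;> ring

theorem even_of_neg_one_zpow_mul_T_sq_zpow_mul_U_sq_zpow_mem_Gamma_four {i j k : ℤ}
    (h : (-1) ^ i * (T ^ 2) ^ j * (U ^ 2) ^ k ∈ Γ(4)) : Even i ∧ Even j ∧ Even k := by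
  rw [mul_assoc, mem_Gamma_iff_dvd] at h
  rcases i.even_or_odd with hi | hi
  · rw [hi.neg_one_zpow, one_mul, coe_T_sq_zpow_mul_U_sq_zpow] at h
    have h01 := h 0 1
    have h10 := h 1 0
    simp at h01 h10
    exact ⟨hi, Int.even_iff.2 (by omega), Int.even_iff.2 (by omega)⟩
  · have h11 := h 1 1
    rw [hi.neg_one_zpow, neg_one_mul, Matrix.SpecialLinearGroup.coe_neg,
      coe_T_sq_zpow_mul_U_sq_zpow] at h11
    simp at h11

end CongruenceSubgroup

/-- The subgroup of SL₂(ℤ) generated by squares of elements of Γ(2) equals Γ(4). -/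
theorem gamma_two_squared_eq_gamma_four :
    Subgroup.closure {x : SL(2, ℤ) | ∃ a ∈ Gamma 2, x = a ^ 2} = Gamma 4 := by
  change Γ(2).sqClosure = Γ(4)
  have := Gamma_normal 2
  have hle : Γ(2).sqClosure ≤ Γ(4) := by
    rw [Subgroup.sqClosure, Subgroup.closure_le]
    rintro _ ⟨a, ha, rfl⟩
    simpa using sq_mem_Gamma_four_mul (N := 1) (by simpa using ha)
  refine le_antisymm hle fun A hA => ?_
  have hA2 : A ∈ Γ(2) := Gamma_le_Gamma_of_dvd (by norm_num) hA
  obtain ⟨i, j, k, hw⟩ := Subgroup.exists_zpow_mul_zpow_mul_zpow_inv_mul_mem_sqClosure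
    neg_one_mem_Gamma_two T_sq_mem_Gamma_two U_sq_mem_Gamma_two (Gamma_two_eq_closure ▸ hA2)
  obtain ⟨hi, hj, hk⟩ := even_of_neg_one_zpow_mul_T_sq_zpow_mul_U_sq_zpow_mem_Gamma_four
    (inv_mem_iff.1 ((Subgroup.mul_mem_cancel_right _ hA).1 (hle hw)))
  have hword := mul_mem
    (mul_mem (Subgroup.zpow_mem_sqClosure_of_even neg_one_mem_Gamma_two hi)
      (Subgroup.zpow_mem_sqClosure_of_even T_sq_mem_Gamma_two hj))
    (Subgroup.zpow_mem_sqClosure_of_even U_sq_mem_Gamma_two hk)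
  exact (Subgroup.mul_mem_cancel_left _ (inv_mem hword)).1 hw
end

section
/- Let Γ̄ be a subgroup of PSL₂(ℤ) that admits a noncongruence lift to SL₂(ℤ). Then every subgroup Ḡ ≤ Γ̄ also admits a noncongruence lift to SL₂(ℤ). -/
open Matrix CongruenceSubgroup
open scoped MatrixGroups

instance : (Subgroup.zpowers (-1 : SL(2, ℤ))).Normal where
  conj_mem := by
    intro x hx g
    obtain ⟨k, rfl⟩ := hx
    have h : g * (-1 : SL(2, ℤ)) ^ k * g⁻¹ = (-1 : SL(2, ℤ)) ^ k := by
      rw [((Commute.neg_one_left g).zpow_left k).symm.eq, mul_inv_cancel_right]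
    rw [h]
    exact Subgroup.zpow_mem _ (Subgroup.mem_zpowers _) k

/-- PSL₂(ℤ) = SL₂(ℤ)/{±I}. -/
abbrev PSL2Z := SL(2, ℤ) ⧸ Subgroup.zpowers (-1 : SL(2, ℤ))

/-- The canonical projection SL₂(ℤ) → PSL₂(ℤ). -/
def proj : SL(2, ℤ) →* PSL2Z := QuotientGroup.mk' _

/-- A subgroup of SL₂(ℤ) is congruence if it contains Γ(N) for some N ≥ 1. -/
def IsCongruence (Γ : Subgroup SL(2, ℤ)) : Prop := ∃ N : ℕ, 0 < N ∧ Gamma N ≤ Γ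

/- A lift of Ḡ is cut out of the noncongruence lift Γ of Γ̄ as Γ ∩ proj⁻¹(Ḡ); it is still
noncongruence because being congruence passes to overgroups. -/

theorem Subgroup.map_inf_comap {G N : Type*} [Group G] [Group N] (f : G →* N)
    (H : Subgroup G) (K : Subgroup N) : (H ⊓ K.comap f).map f = H.map f ⊓ K :=
  SetLike.coe_injective (Set.image_inter_preimage f H K)

theorem IsCongruence.mono {Γ Γ' : Subgroup SL(2, ℤ)} (hle : Γ ≤ Γ') (hΓ : IsCongruence Γ) :
    IsCongruence Γ' :=
  let ⟨N, hN, hΓN⟩ := hΓ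
  ⟨N, hN, hΓN.trans hle⟩

/-- If Γ̄ ≤ PSL₂(ℤ) admits a noncongruence lift, so does every subgroup Ḡ ≤ Γ̄. -/
theorem noncongruence_lift_of_subgroup (Γbar Gbar : Subgroup PSL2Z) (hle : Gbar ≤ Γbar)
    (h : ∃ Γ : Subgroup SL(2, ℤ), Subgroup.map proj Γ = Γbar ∧ ¬ IsCongruence Γ) :
    ∃ G : Subgroup SL(2, ℤ), Subgroup.map proj G = Gbar ∧ ¬ IsCongruence G := by
  obtain ⟨Γ, rfl, hΓ⟩ := h
  refine ⟨Γ ⊓ Gbar.comap proj, ?_, fun hG => hΓ (hG.mono inf_le_left)⟩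
  rw [Subgroup.map_inf_comap, inf_eq_right.mpr hle]
end

section
/- Let p be an odd prime, N = p^r, and u = p^{2r-1}(p-1)/2. Then for every A ∈ Γ₀(N), A^u ≡ ±I mod N. -/
/-!
Modulo `N = p ^ r` a matrix of `Γ₀(N)` is upper triangular with diagonal `a, d`, `a * d = 1`.
Put `m = φ(N) / 2`. By Euler `(a ^ m) ^ 2 = 1`, and as `p` is odd the only square roots of unity
in `ZMod (p ^ r)` are `±1`, so `d ^ m = a ^ m = ±1` and the `m`-th power of the matrix is `±1`
times a unipotent matrix. Raising to the `N`-th power kills the unipotent part, because `N = 0`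
in `ZMod N`, and `u = N * m`.
-/

open Matrix CongruenceSubgroup
open scoped MatrixGroups

/-- Reduction of SL₂(ℤ) modulo N. -/
def redMod (N : ℕ) : SL(2, ℤ) →* Matrix.SpecialLinearGroup (Fin 2) (ZMod N) :=
  Matrix.SpecialLinearGroup.map (Int.castRingHom (ZMod N))

theorem ZMod.eq_one_or_eq_neg_one_of_sq_eq_one_of_prime_pow {p : ℕ} (hp : p.Prime) (hodd : Odd p)
    {r : ℕ} {x : ZMod (p ^ r)} (hx : x ^ 2 = 1) : x = 1 ∨ x = -1 := by
  obtain ⟨y, rfl⟩ := ZMod.intCast_surjective x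
  have hdvd : (p : ℤ) ^ r ∣ (y - 1) * (y + 1) := by
    have : ((p ^ r : ℕ) : ℤ) ∣ (y - 1) * (y + 1) := by
      rw [← ZMod.intCast_zmod_eq_zero_iff_dvd]
      push_cast
      linear_combination hx
    exact_mod_cast this
  have hpZ : Prime (p : ℤ) := Nat.prime_iff_prime_int.mp hp
  have h_not_both : ¬ ((p : ℤ) ∣ y - 1 ∧ (p : ℤ) ∣ y + 1) := by
    rintro ⟨h₁, h₂⟩
    have h2 : p ∣ 2 := by exact_mod_cast (by simpa using dvd_sub h₂ h₁ : (p : ℤ) ∣ 2)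
    exact hodd.not_two_dvd_nat ((Nat.prime_dvd_prime_iff_eq hp Nat.prime_two).1 h2 ▸ h2)
  have cast_eq_zero {z : ℤ} (hz : (p : ℤ) ^ r ∣ z) : (z : ZMod (p ^ r)) = 0 :=
    (ZMod.intCast_zmod_eq_zero_iff_dvd _ _).2 (by exact_mod_cast hz)
  by_cases h₂ : (p : ℤ) ∣ y + 1
  · right
    have hcop : IsCoprime ((p : ℤ) ^ r) (y - 1) :=
      (hpZ.coprime_iff_not_dvd.mpr fun h₁ ↦ h_not_both ⟨h₁, h₂⟩).pow_left
    have := cast_eq_zero (hcop.dvd_of_dvd_mul_left hdvd)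
    push_cast at this
    linear_combination this
  · left
    have hcop : IsCoprime ((p : ℤ) ^ r) (y + 1) := (hpZ.coprime_iff_not_dvd.mpr h₂).pow_left
    have := cast_eq_zero (hcop.dvd_of_dvd_mul_right hdvd)
    push_cast at this
    linear_combination this

theorem ZMod.pow_totient_of_mul_eq_one {n : ℕ} {a b : ZMod n} (hab : a * b = 1) :
    a ^ n.totient = 1 := by
  rw [← Units.val_mkOfMulEqOne hab, ← Units.val_pow_eq_pow_val, ZMod.pow_totient, Units.val_one]

section UpperTriangular

variable {R : Type*} [CommRing R]

theorem exists_upperTriangular_pow_eq (a b d : R) (n : ℕ) :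
    ∃ c, !![a, b; 0, d] ^ n = !![a ^ n, c; 0, d ^ n] := by
  induction n with
  | zero => exact ⟨0, by simp [Matrix.one_fin_two]⟩
  | succ n ih =>
    obtain ⟨c, hc⟩ := ih
    refine ⟨a ^ n * b + c * d, ?_⟩
    rw [pow_succ, hc, Matrix.mul_fin_two]
    simp [pow_succ]

theorem unipotent_pow (y : R) (n : ℕ) : !![1, y; 0, 1] ^ n = !![1, (n : R) * y; 0, 1] := by
  induction n with
  | zero => simp [Matrix.one_fin_two]
  | succ n ih =>
    rw [pow_succ, ih, Matrix.mul_fin_two]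
    simp [add_mul, add_comm]

theorem unipotent_pow_eq_one_of_charP (n : ℕ) [CharP R n] (y : R) : !![1, y; 0, 1] ^ n = 1 := by
  rw [unipotent_pow, CharP.cast_eq_zero, zero_mul, Matrix.one_fin_two]

theorem upperTriangular_pow_eq_smul_unipotent {a b d : R} (had : a * d = 1) {m : ℕ}
    (ha : a ^ (2 * m) = 1) : ∃ c, !![a, b; 0, d] ^ m = a ^ m • !![1, c; 0, 1] := by
  obtain ⟨c, hc⟩ := exists_upperTriangular_pow_eq a b d m
  have ha' : (a ^ m) ^ 2 = 1 := by rw [← pow_mul, mul_comm, ha]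
  have hadm : a ^ m * d ^ m = 1 := by rw [← mul_pow, had, one_pow]
  have hdm : d ^ m = a ^ m := by linear_combination (-d ^ m) * ha' + a ^ m * hadm
  refine ⟨a ^ m * c, ?_⟩
  rw [hc, hdm]
  ext i j
  fin_cases i <;> fin_cases j <;> simp
  linear_combination (-c) * ha'

end UpperTriangular

theorem exists_redMod_eq_upperTriangular_of_mem_Gamma0 {N : ℕ} {A : SL(2, ℤ)}
    (hA : A ∈ Gamma0 N) : ∃ a b d : ZMod N, a * d = 1 ∧
      (redMod N A : Matrix (Fin 2) (Fin 2) (ZMod N)) = !![a, b; 0, d] := by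
  set M := (redMod N A : Matrix (Fin 2) (Fin 2) (ZMod N))
  have hc : M 1 0 = 0 := by simpa [M, redMod] using Gamma0_mem.mp hA
  refine ⟨M 0 0, M 0 1, M 1 1, ?_, hc ▸ M.eta_fin_two⟩
  have hdet : M.det = 1 := (redMod N A).property
  simpa [hc] using M.det_fin_two.symm.trans hdet

/-- For p an odd prime, N = p^r and u = p^{2r-1}(p-1)/2, every A ∈ Γ₀(N)
satisfies A^u ≡ ±I mod N. -/
theorem pow_u_eq_pm_one_mod_N (p : ℕ) (hp : p.Prime) (hodd : Odd p) (r : ℕ) (hr : 1 ≤ r)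
    (A : SL(2, ℤ)) (hA : A ∈ Gamma0 (p ^ r)) :
    redMod (p ^ r) (A ^ (p ^ (2 * r - 1) * (p - 1) / 2)) = 1 ∨
    redMod (p ^ r) (A ^ (p ^ (2 * r - 1) * (p - 1) / 2)) = -1 := by
  obtain ⟨a, b, d, had, hA⟩ := exists_redMod_eq_upperTriangular_of_mem_Gamma0 hA
  have htot : 2 ∣ (p ^ r).totient := by
    rw [Nat.totient_prime_pow hp hr]
    exact Dvd.dvd.mul_left (even_iff_two_dvd.1 (Nat.Odd.sub_odd hodd odd_one)) _
  set m := (p ^ r).totient / 2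
  have hu : p ^ (2 * r - 1) * (p - 1) / 2 = p ^ r * m := by
    rw [← Nat.mul_div_assoc _ htot, Nat.totient_prime_pow hp hr, ← mul_assoc, ← pow_add]
    congr 3
    omega
  have ha : a ^ (2 * m) = 1 := by
    rw [Nat.mul_div_cancel' htot]
    exact ZMod.pow_totient_of_mul_eq_one had
  obtain ⟨c, hc⟩ := upperTriangular_pow_eq_smul_unipotent (b := b) had ha
  have hpow : (redMod (p ^ r) A : Matrix (Fin 2) (Fin 2) (ZMod (p ^ r))) ^
      (p ^ (2 * r - 1) * (p - 1) / 2) = (a ^ m) ^ p ^ r • 1 := by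
    rw [hA, hu, pow_mul', hc, smul_pow, unipotent_pow_eq_one_of_charP]
  have ha_sq : (a ^ m) ^ 2 = 1 := by rw [← pow_mul, mul_comm, ha]
  rcases ZMod.eq_one_or_eq_neg_one_of_sq_eq_one_of_prime_pow hp hodd ha_sq with h | h
  · left
    ext1
    simp [hpow, h]
  · right
    ext1
    simp [hpow, h, hodd.pow.neg_one_pow]
end
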